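/- Let (Ω, F, P) be a probability space, let n ≥ n_P ≥ 1 be integers with n_o = n − n_P, and let ν > 0. Let z₁, …, z_n : Ω → ℝ be random variables such that z₁, …, z_{n_P} are independent and identically distributed; z_{n_P+1}, …, z_n are arbitrary (measurable). Set f_ν(z) = z/(1 + z²/ν), μ(ν) = E[f_ν(z₁)], σ²_ν = Var(f_ν(z₁)), and μ̂_n(ν) = (1/n)·Σ_{t=1}^n f_ν(z_t). Then for every x ≥ 0, P(|μ̂_n(ν) − μ(ν)| ≥ √ν·n_o/n + (n_P/n)·x/√n_P) ≤ 2·exp(−x²/(2σ²_ν + (2/3)·√(ν/n_P)·x)). -/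

import Mathlib

/-!
Each transformed observation `f_ν(z_t)` lies in `[-√ν/2, √ν/2]`, so after centring at `μ(ν)` it
lies in `[-√ν, √ν]`. Whatever their values, the `n - nP` contaminated terms therefore move the
empirical mean by at most `√ν (n - nP) / n`, and the deviation of the remaining `nP` i.i.d. terms
is controlled by Bernstein's inequality. The latter follows from the Chernoff bound: since
`(k + 2)! ≥ 2 · 3ᵏ`, the tail of the exponential series is geometric, and a centred variable
bounded by `b` with variance `σ²` satisfies `E e^{tY} ≤ exp (t² σ² / (2 (1 - t b / 3)))` for
`0 ≤ t < 3 / b`.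
-/

open Real MeasureTheory ProbabilityTheory Finset
open scoped Nat

theorem Real.exp_le_one_add_add_sq_div_of_abs_le {u c : ℝ} (hu : |u| ≤ c) (hc : c < 3) :
    exp u ≤ 1 + u + u ^ 2 / (2 * (1 - c / 3)) := by
  have hc₀ : 0 ≤ c / 3 := by linarith [abs_nonneg u]
  have hc₁ : c / 3 < 1 := by linarith
  have hterm (n : ℕ) : u ^ (n + 2) / (n + 2)! ≤ u ^ 2 / 2 * (c / 3) ^ n := by
    have hfact : (2 * 3 ^ n : ℝ) ≤ (n + 2)! := by
      exact_mod_cast add_comm n 2 ▸ Nat.factorial_mul_pow_le_factorial (m := 2) (n := n)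
    calc u ^ (n + 2) / (n + 2)! ≤ |u| ^ n * u ^ 2 / (2 * 3 ^ n) := by
          rw [← sq_abs u, ← pow_add]
          gcongr ?_ / ?_
          exact (le_abs_self _).trans (abs_pow u _).le
      _ ≤ c ^ n * u ^ 2 / (2 * 3 ^ n) := by gcongr
      _ = u ^ 2 / 2 * (c / 3) ^ n := by rw [div_pow]; ring
  have hgeom : Summable fun n : ℕ => u ^ 2 / 2 * (c / 3) ^ n :=
    (summable_geometric_of_lt_one hc₀ hc₁).mul_left _
  have hsum := Real.summable_pow_div_factorial u
  calc exp u = ∑ n ∈ range 2, u ^ n / n ! + ∑' n, u ^ (n + 2) / (n + 2)! := by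
        rw [hsum.sum_add_tsum_nat_add, Real.exp_eq_exp_ℝ, NormedSpace.exp_eq_tsum_div]
    _ ≤ 1 + u + ∑' n : ℕ, u ^ 2 / 2 * (c / 3) ^ n := by
        norm_num [sum_range_succ]
        exact hsum.comp_injective (add_left_injective 2) |>.tsum_le_tsum hterm hgeom
    _ = 1 + u + u ^ 2 / (2 * (1 - c / 3)) := by
        rw [tsum_mul_left, tsum_geometric_of_lt_one hc₀ hc₁]
        field_simp

theorem exists_bernstein_chernoff_parameter {V b ε : ℝ} (hV : 0 ≤ V) (hb : 0 ≤ b)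
    (hε : 0 ≤ ε) : ∃ t, 0 ≤ t ∧ t * b < 3 ∧
      -t * ε + t ^ 2 * V / (2 * (1 - t * b / 3)) = -ε ^ 2 / (2 * V + 2 / 3 * b * ε) := by
  rcases (by positivity : 0 ≤ V + 2 * b * ε / 3).eq_or_lt with hD | hD
  · refine ⟨0, le_rfl, by norm_num, ?_⟩
    have : 2 * V + 2 / 3 * b * ε = 0 := by linarith [mul_nonneg hb hε]
    simp [this]
  -- Same exponent as the textbook choice `ε / (V + b ε / 3)`, but `t b ≤ 3 / 2` even when `V = 0`.
  refine ⟨ε / (V + 2 * b * ε / 3), by positivity, ?_, ?_⟩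
  · rw [div_mul_eq_mul_div, div_lt_iff₀ hD]
    linarith [mul_nonneg hb hε, mul_comm b ε]
  · have hK : 0 < V + b * ε / 3 := by linarith [mul_nonneg hb hε]
    set D := V + 2 * b * ε / 3 with hD_def
    set K := V + b * ε / 3 with hK_def
    have h₁ : 1 - ε / D * b / 3 = K / D := by
      field_simp
      linear_combination 3 * hD_def - 3 * hK_def
    have h₂ : 2 * V + 2 / 3 * b * ε = 2 * K := by linear_combination -2 * hK_def
    rw [h₁, h₂]
    clear_value D K
    field_simp
    linear_combination ε ^ 2 * hD_def - 2 * ε ^ 2 * hK_def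

theorem abs_div_one_add_sq_div_le {ν : ℝ} (hν : 0 < ν) (v : ℝ) :
    |v / (1 + v ^ 2 / ν)| ≤ √ν / 2 := by
  obtain ⟨s, hs, rfl⟩ : ∃ s, 0 < s ∧ ν = s ^ 2 := ⟨√ν, sqrt_pos.2 hν, (sq_sqrt hν.le).symm⟩
  have hden : 0 < 1 + v ^ 2 / s ^ 2 := by positivity
  have hgap : s / 2 * (1 + v ^ 2 / s ^ 2) - |v| = (s - |v|) ^ 2 / (2 * s) := by
    field_simp
    rw [← sq_abs v]
    ring
  rw [abs_div, abs_of_pos hden, div_le_iff₀ hden, sqrt_sq hs.le]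
  linarith [div_nonneg (sq_nonneg (s - |v|)) (by positivity : (0 : ℝ) ≤ 2 * s)]

theorem abs_average_sub_le {a : ℕ → ℝ} {c B : ℝ} {m n : ℕ} (hmn : m ≤ n) (hn : 0 < n)
    (hB : ∀ t ∈ Ico m n, |a t - c| ≤ B) :
    |1 / n * ∑ t ∈ range n, a t - c| ≤ B * (n - m : ℕ) / n + |∑ t ∈ range m, (a t - c)| / n := by
  have hn' : (0 : ℝ) < n := by exact_mod_cast hn
  have hsplit : 1 / n * ∑ t ∈ range n, a t - c =
      (∑ t ∈ range m, (a t - c) + ∑ t ∈ Ico m n, (a t - c)) / n := by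
    rw [sum_range_add_sum_Ico _ hmn, sum_sub_distrib, sum_const, card_range, nsmul_eq_mul]
    field_simp
  have htail : |∑ t ∈ Ico m n, (a t - c)| ≤ B * (n - m : ℕ) := by
    calc |∑ t ∈ Ico m n, (a t - c)| ≤ ∑ t ∈ Ico m n, |a t - c| := abs_sum_le_sum_abs _ _
      _ ≤ ∑ t ∈ Ico m n, B := sum_le_sum hB
      _ = B * (n - m : ℕ) := by rw [sum_const, Nat.card_Ico, nsmul_eq_mul, mul_comm]
  rw [hsplit, abs_div, abs_of_pos hn', add_comm (B * _ / _), ← add_div]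
  gcongr
  exact (abs_add_le _ _).trans (by linarith)

section Bernstein

variable {Ω : Type*} [MeasurableSpace Ω] {P : Measure Ω} [IsProbabilityMeasure P]

theorem abs_integral_le_of_abs_le {X : Ω → ℝ} {C : ℝ} (h : ∀ ω, |X ω| ≤ C) : |P[X]| ≤ C := by
  simpa using norm_integral_le_of_norm_le_const (μ := P)
    (ae_of_all _ fun ω => (norm_eq_abs _).trans_le (h ω))

theorem mgf_le_exp_of_abs_le_of_integral_eq_zero {Y : Ω → ℝ} (hY : Measurable Y) {b t : ℝ}
    (hb : ∀ ω, |Y ω| ≤ b) (hmean : P[Y] = 0) (ht : 0 ≤ t) (htb : t * b < 3) :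
    mgf Y P t ≤ exp (t ^ 2 * variance Y P / (2 * (1 - t * b / 3))) := by
  set k := t ^ 2 / (2 * (1 - t * b / 3))
  have hY₂ : MemLp Y 2 P := .of_bound hY.aestronglyMeasurable b (ae_of_all _ hb)
  have hY₁ : Integrable Y P := hY₂.integrable one_le_two
  have hYsq : Integrable (fun ω => Y ω ^ 2) P := hY₂.integrable_sq
  have hexp : Integrable (fun ω => exp (t * Y ω)) P := integrable_exp_mul_of_le t b ht
    hY.aemeasurable (ae_of_all _ fun ω => (le_abs_self _).trans (hb ω))
  have hpoint (ω : Ω) : exp (t * Y ω) ≤ 1 + t * Y ω + k * Y ω ^ 2 := by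
    have := exp_le_one_add_add_sq_div_of_abs_le (u := t * Y ω) (c := t * b)
      (by rw [abs_mul, abs_of_nonneg ht]; exact mul_le_mul_of_nonneg_left (hb ω) ht) htb
    rwa [mul_pow, mul_div_right_comm] at this
  calc mgf Y P t ≤ ∫ ω, (1 + t * Y ω + k * Y ω ^ 2) ∂P :=
        integral_mono hexp (by fun_prop) hpoint
    _ = 1 + k * variance Y P := by
        rw [integral_add (by fun_prop) (by fun_prop), integral_add (by fun_prop) (by fun_prop),
          integral_const_mul, integral_const_mul,
          hmean, variance_of_integral_eq_zero hY.aemeasurable hmean]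
        simp
    _ ≤ exp (t ^ 2 * variance Y P / (2 * (1 - t * b / 3))) := by
        rw [mul_div_right_comm]
        linarith [add_one_le_exp (k * variance Y P)]

theorem measureReal_sum_ge_le_bernstein {ι : Type*} {Y : ι → Ω → ℝ}
    (hmeas : ∀ i, Measurable (Y i)) (hindep : iIndepFun Y P) {b : ℝ} (hb₀ : 0 ≤ b)
    (hb : ∀ i ω, |Y i ω| ≤ b) (hmean : ∀ i, P[Y i] = 0) (s : Finset ι) {ε : ℝ} (hε : 0 ≤ ε) :
    P.real {ω | ε ≤ ∑ i ∈ s, Y i ω} ≤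
      exp (-ε ^ 2 / (2 * ∑ i ∈ s, variance (Y i) P + 2 / 3 * b * ε)) := by
  obtain ⟨t, ht, htb, hexponent⟩ := exists_bernstein_chernoff_parameter
    (sum_nonneg fun i _ => variance_nonneg (Y i) P) hb₀ hε
  have hexp (i : ι) : Integrable (fun ω => exp (t * Y i ω)) P := integrable_exp_mul_of_le t b ht
    (hmeas i).aemeasurable (ae_of_all _ fun ω => (le_abs_self _).trans (hb i ω))
  calc P.real {ω | ε ≤ ∑ i ∈ s, Y i ω} ≤ exp (-t * ε) * mgf (∑ i ∈ s, Y i) P t := by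
        simpa only [Finset.sum_apply] using measure_ge_le_exp_mul_mgf ε ht
          (hindep.integrable_exp_mul_sum hmeas (s := s) fun i _ => hexp i)
    _ = exp (-t * ε) * ∏ i ∈ s, mgf (Y i) P t := by rw [hindep.mgf_sum hmeas]
    _ ≤ exp (-t * ε) * ∏ i ∈ s, exp (t ^ 2 * variance (Y i) P / (2 * (1 - t * b / 3))) := by
        gcongr with i
        · exact fun i _ => mgf_nonneg
        · exact mgf_le_exp_of_abs_le_of_integral_eq_zero (hmeas i) (hb i) (hmean i) ht htb
    _ = exp (-ε ^ 2 / (2 * ∑ i ∈ s, variance (Y i) P + 2 / 3 * b * ε)) := by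
        rw [← exp_sum, ← exp_add, ← sum_div, ← mul_sum, hexponent]

theorem measure_abs_sum_ge_le_bernstein {ι : Type*} {Y : ι → Ω → ℝ}
    (hmeas : ∀ i, Measurable (Y i)) (hindep : iIndepFun Y P) {b : ℝ} (hb₀ : 0 ≤ b)
    (hb : ∀ i ω, |Y i ω| ≤ b) (hmean : ∀ i, P[Y i] = 0) (s : Finset ι) {ε : ℝ} (hε : 0 ≤ ε) :
    P {ω | ε ≤ |∑ i ∈ s, Y i ω|} ≤
      ENNReal.ofReal (2 * exp (-ε ^ 2 / (2 * ∑ i ∈ s, variance (Y i) P + 2 / 3 * b * ε))) := by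
  have hupper := measureReal_sum_ge_le_bernstein hmeas hindep hb₀ hb hmean s hε
  have hlower := measureReal_sum_ge_le_bernstein (Y := fun i => -Y i) (fun i => (hmeas i).neg)
    (hindep.comp (fun _ => Neg.neg) fun _ => measurable_neg) hb₀ (by simpa using hb)
    (by simpa [integral_neg] using hmean) s hε
  simp only [Pi.neg_apply, sum_neg_distrib, variance_neg] at hlower
  have hsplit : {ω | ε ≤ |∑ i ∈ s, Y i ω|} =
      {ω | ε ≤ ∑ i ∈ s, Y i ω} ∪ {ω | ε ≤ -∑ i ∈ s, Y i ω} := by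
    ext ω
    simp only [Set.mem_union, Set.mem_ofPred_eq, le_abs]
  rw [← ofReal_measureReal, hsplit]
  gcongr
  linarith [measureReal_union_le (μ := P) {ω | ε ≤ ∑ i ∈ s, Y i ω} {ω | ε ≤ -∑ i ∈ s, Y i ω}]

theorem measure_abs_sum_sub_integral_ge_le_bernstein {X : ℕ → Ω → ℝ} (hmeas : ∀ t, Measurable (X t))
    {m : ℕ} (hindep : iIndepFun (fun i : Fin m => X i) P)
    (hident : ∀ i : Fin m, IdentDistrib (X i) (X 0) P P) {b : ℝ} (hX : ∀ t ω, |X t ω| ≤ b / 2)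
    {ε : ℝ} (hε : 0 ≤ ε) :
    P {ω | ε ≤ |∑ t ∈ range m, (X t ω - P[X 0])|} ≤
      ENNReal.ofReal (2 * exp (-ε ^ 2 / (2 * (m * variance (X 0) P) + 2 / 3 * b * ε))) := by
  set c := P[X 0]
  obtain ⟨ω₀⟩ := nonempty_of_isProbabilityMeasure P
  have hb₀ : 0 ≤ b := by linarith [(abs_nonneg _).trans (hX 0 ω₀)]
  have hc : |c| ≤ b / 2 := abs_integral_le_of_abs_le (hX 0)
  have hcentered (i : Fin m) : P[fun ω => X i ω - c] = 0 := by
    have hint : Integrable (X i) P := .of_bound (hmeas i).aestronglyMeasurable _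
      (ae_of_all _ fun ω => (norm_eq_abs _).trans_le (hX i ω))
    rw [integral_sub hint (integrable_const _), integral_const, (hident i).integral_eq]
    simp [c]
  have hvar (i : Fin m) : variance (fun ω => X i ω - c) P = variance (X 0) P := by
    rw [variance_sub_const (hmeas i).aestronglyMeasurable, (hident i).variance_eq]
  have hset : {ω | ε ≤ |∑ t ∈ range m, (X t ω - c)|} = {ω | ε ≤ |∑ i : Fin m, (X i ω - c)|} :=
    Set.ext fun ω => by
      simp only [Set.mem_ofPred_eq, Fin.sum_univ_eq_sum_range (fun t => X t ω - c)]
  have := measure_abs_sum_ge_le_bernstein (Y := fun (i : Fin m) ω => X i ω - c)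
    (fun i => (hmeas i).sub_const c) (hindep.comp (fun _ v => v - c) fun _ => by fun_prop) hb₀
    (fun i ω => (abs_sub _ _).trans (by linarith [hX i ω])) hcentered univ hε
  simp only [hvar, sum_const, card_univ, Fintype.card_fin, nsmul_eq_mul] at this
  rwa [hset]

theorem measure_contaminated_average_sub_integral_ge_le {X : ℕ → Ω → ℝ}
    (hmeas : ∀ t, Measurable (X t)) {m n : ℕ} (hm : 0 < m) (hmn : m ≤ n)
    (hindep : iIndepFun (fun i : Fin m => X i) P)
    (hident : ∀ i : Fin m, IdentDistrib (X i) (X 0) P P) {b : ℝ} (hX : ∀ t ω, |X t ω| ≤ b / 2)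
    {x : ℝ} (hx : 0 ≤ x) :
    P {ω | b * (n - m : ℕ) / n + m / n * (x / √m) ≤ |1 / n * ∑ t ∈ range n, X t ω - P[X 0]|} ≤
      ENNReal.ofReal (2 * exp (-x ^ 2 / (2 * variance (X 0) P + 2 / 3 * (b / √m) * x))) := by
  have hm₀ : (0 : ℝ) < m := by exact_mod_cast hm
  have hn₀ : (0 : ℝ) < n := by exact_mod_cast hm.trans_le hmn
  have hc : |P[X 0]| ≤ b / 2 := abs_integral_le_of_abs_le (hX 0)
  have hevent : {ω | b * (n - m : ℕ) / n + m / n * (x / √m)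
        ≤ |1 / n * ∑ t ∈ range n, X t ω - P[X 0]|} ⊆
      {ω | √m * x ≤ |∑ t ∈ range m, (X t ω - P[X 0])|} := by
    intro ω hω
    have := hω.out.trans (abs_average_sub_le hmn (hm.trans_le hmn)
      fun t _ => (abs_sub _ _).trans (by linarith [hX t ω]))
    have hx' : (m : ℝ) / n * (x / √m) = √m * x / n := by
      field_simp
      rw [sq_sqrt hm₀.le]
      ring
    rw [Set.mem_ofPred_eq, ← div_le_div_iff_of_pos_right hn₀]
    linarith
  have hexponent : -(√m * x) ^ 2 / (2 * (m * variance (X 0) P) + 2 / 3 * b * (√m * x)) =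
      -x ^ 2 / (2 * variance (X 0) P + 2 / 3 * (b / √m) * x) := by
    have hden : 2 * (m * variance (X 0) P) + 2 / 3 * b * (√m * x) =
        m * (2 * variance (X 0) P + 2 / 3 * (b / √m) * x) := by
      field_simp
      linear_combination b * x * sq_sqrt hm₀.le
    rw [hden, mul_pow, sq_sqrt hm₀.le, neg_mul_eq_mul_neg, mul_div_mul_left _ _ hm₀.ne']
  calc _ ≤ P {ω | √m * x ≤ |∑ t ∈ range m, (X t ω - P[X 0])|} := measure_mono hevent
    _ ≤ _ := hexponent ▸ measure_abs_sum_sub_integral_ge_le_bernstein hmeas hindep hident hX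
      (by positivity)

end Bernstein

/-- Bernstein-type concentration for the robust location estimator under adversarial
contamination: the observations `z 0, …, z (nP−1)` are i.i.d., the remaining
`n_o = n − nP` observations are arbitrary measurable random variables, and with
`f_ν(z) = z/(1 + z²/ν)`, `μ(ν) = E[f_ν(z 0)]`, `σ²_ν = Var(f_ν(z 0))`, and
`μ̂_n(ν) = (1/n)·Σₜ f_ν(z t)`, for every `x ≥ 0`:
`P(|μ̂_n(ν) − μ(ν)| ≥ √ν·n_o/n + (nP/n)·x/√nP)
  ≤ 2·exp(−x²/(2σ²_ν + (2/3)·√(ν/nP)·x))`. -/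
theorem robust_mean_bernstein_bound {Ω : Type*} [MeasurableSpace Ω]
    (P : Measure Ω) [IsProbabilityMeasure P]
    (n nP : ℕ) (hnP : 1 ≤ nP) (hn : nP ≤ n) {ν : ℝ} (hν : 0 < ν)
    (z : ℕ → Ω → ℝ) (hmeas : ∀ t, Measurable (z t))
    (hindep : iIndepFun (fun i : Fin nP => z i) P)
    (hident : ∀ i : Fin nP, IdentDistrib (z i) (z 0) P P)
    (x : ℝ) (hx : 0 ≤ x) :
    P {ω | Real.sqrt ν * ((n - nP : ℕ) : ℝ) / (n : ℝ)
            + ((nP : ℝ) / (n : ℝ)) * (x / Real.sqrt nP)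
          ≤ |(1 / (n : ℝ)) * ∑ t ∈ Finset.range n, z t ω / (1 + (z t ω) ^ 2 / ν)
              - ∫ ω', z 0 ω' / (1 + (z 0 ω') ^ 2 / ν) ∂P|}
      ≤ ENNReal.ofReal (2 * Real.exp (-(x ^ 2) /
          (2 * variance (fun ω => z 0 ω / (1 + (z 0 ω) ^ 2 / ν)) P
            + (2 / 3) * Real.sqrt (ν / nP) * x))) := by
  have hf : Measurable fun v : ℝ => v / (1 + v ^ 2 / ν) := by fun_prop
  rw [sqrt_div hν.le]
  exact measure_contaminated_average_sub_integral_ge_le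
    (X := fun t ω => z t ω / (1 + z t ω ^ 2 / ν)) (fun t => hf.comp (hmeas t)) hnP hn
    (hindep.comp (fun _ => _) fun _ => hf) (fun i => (hident i).comp hf)
    (fun _ _ => abs_div_one_add_sq_div_le hν _) hx
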